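/- arXiv:2110.14001 — 4 statements merged into one kernel-verified Lean document; each statement's English description precedes it below -/
import Mathlib

section
/- Let 𝒳, ℛ, 𝒴 be measurable spaces, κ : 𝒳 → 𝒴 a Markov kernel, Φ : 𝒳 → ℛ measurable, h : ℛ → ℝ measurable, ℓ : 𝒴 × ℝ → ℝ measurable, and Q a probability measure on 𝒳 such that (x,y) ↦ ℓ(y, h(Φ x)) is integrable with respect to the joint measure Q ⊗ κ on 𝒳 × 𝒴. Let ℓ_{h,Q}(x) = ∫ ℓ(y, h(Φ x)) dκ(x)(y) and let ℓ_{h,Q^Φ} : ℛ → ℝ be a measurable function such that ℓ_{h,Q^Φ} ∘ Φ ∘ fst is (Q ⊗ κ)-a.e. equal to the conditional expectation of (x,y) ↦ ℓ(y, h(Φ x)) with respect to the σ-algebra generated by (x,y) ↦ Φ x. Then ∫_𝒳 ℓ_{h,Q}(x) dQ(x) = ∫_ℛ ℓ_{h,Q^Φ}(φ) d(Φ_*Q)(φ). -/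
open MeasureTheory ProbabilityTheory

/-! Both sides are the integral of the loss against `Q ⊗ₘ κ`: the left-hand side by
disintegrating `Q ⊗ₘ κ` along its first marginal `Q`, the right-hand side because a version of
the conditional expectation has the same integral as the loss and `ℓΦ ∘ Φ ∘ Prod.fst` only
sees the first marginal. -/

namespace MeasureTheory

theorem integral_eq_of_ae_eq_condExp {α E : Type*} [NormedAddCommGroup E] [NormedSpace ℝ E]
    [CompleteSpace E] {m m₀ : MeasurableSpace α} {μ : Measure α} {f g : α → E} (hm : m ≤ m₀)
    [SigmaFinite (μ.trim hm)] (hg : g =ᵐ[μ] μ[f | m]) :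
    ∫ x, g x ∂μ = ∫ x, f x ∂μ :=
  (integral_congr_ae hg).trans (integral_condExp hm)

theorem Measure.integral_comp_fst_compProd {α β E : Type*} [MeasurableSpace α]
    [MeasurableSpace β] [NormedAddCommGroup E] [NormedSpace ℝ E] (μ : Measure α) [SFinite μ]
    (κ : Kernel α β) [IsMarkovKernel κ] {g : α → E} (hg : AEStronglyMeasurable g μ) :
    ∫ p, g p.1 ∂(μ ⊗ₘ κ) = ∫ x, g x ∂μ := by
  rw [← Measure.fst_compProd μ κ] at hg
  rw [← integral_map measurable_fst.aemeasurable hg, ← Measure.fst, Measure.fst_compProd]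

end MeasureTheory

theorem expected_loss_covariate_eq_representation_general
    {𝒳 ℛ 𝒴 : Type*} [MeasurableSpace 𝒳] [MeasurableSpace ℛ] [MeasurableSpace 𝒴]
    (κ : Kernel 𝒳 𝒴) [IsMarkovKernel κ]
    (Φ : 𝒳 → ℛ) (hΦ : Measurable Φ)
    (h : ℛ → ℝ)
    (ℓ : 𝒴 × ℝ → ℝ)
    (Q : Measure 𝒳) [IsProbabilityMeasure Q]
    (hint : Integrable (fun p : 𝒳 × 𝒴 => ℓ (p.2, h (Φ p.1))) (Q ⊗ₘ κ))
    (ℓΦ : ℛ → ℝ) (hℓΦ : Measurable ℓΦ)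
    (hcond : (fun p : 𝒳 × 𝒴 => ℓΦ (Φ p.1)) =ᵐ[Q ⊗ₘ κ]
      (Q ⊗ₘ κ)[(fun p : 𝒳 × 𝒴 => ℓ (p.2, h (Φ p.1))) |
        MeasurableSpace.comap (fun p : 𝒳 × 𝒴 => Φ p.1) inferInstance]) :
    ∫ x, (∫ y, ℓ (y, h (Φ x)) ∂(κ x)) ∂Q = ∫ φ, ℓΦ φ ∂(Measure.map Φ Q) :=
  calc ∫ x, (∫ y, ℓ (y, h (Φ x)) ∂(κ x)) ∂Q
      = ∫ p, ℓ (p.2, h (Φ p.1)) ∂(Q ⊗ₘ κ) := (Measure.integral_compProd hint).symm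
    _ = ∫ p, ℓΦ (Φ p.1) ∂(Q ⊗ₘ κ) :=
        (integral_eq_of_ae_eq_condExp (hΦ.comp measurable_fst).comap_le hcond).symm
    _ = ∫ x, ℓΦ (Φ x) ∂Q :=
        Measure.integral_comp_fst_compProd Q κ (hℓΦ.comp hΦ).aestronglyMeasurable
    _ = ∫ φ, ℓΦ φ ∂(Measure.map Φ Q) :=
        (integral_map hΦ.aemeasurable hℓΦ.aestronglyMeasurable).symm

/-- Lemma C.1: the expected pointwise loss in covariate space equals the
expected pointwise loss in representation space under the pushforward `Φ_*Q`.  Here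
`ℓ_{h,Q}(x) = ∫ ℓ(y, h(Φ x)) dκ(x)(y)` and `ℓΦ` is a version of the conditional expectation
of `(x,y) ↦ ℓ(y, h(Φ x))` given the σ-algebra generated by `(x,y) ↦ Φ x` under `Q ⊗ κ`. -/
theorem expected_loss_covariate_eq_representation
    {𝒳 ℛ 𝒴 : Type*} [MeasurableSpace 𝒳] [MeasurableSpace ℛ] [MeasurableSpace 𝒴]
    (κ : Kernel 𝒳 𝒴) [IsMarkovKernel κ]
    (Φ : 𝒳 → ℛ) (hΦ : Measurable Φ)
    (h : ℛ → ℝ) (hh : Measurable h)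
    (ℓ : 𝒴 × ℝ → ℝ) (hℓ : Measurable ℓ)
    (Q : Measure 𝒳) [IsProbabilityMeasure Q]
    (hint : Integrable (fun p : 𝒳 × 𝒴 => ℓ (p.2, h (Φ p.1))) (Q ⊗ₘ κ))
    (ℓΦ : ℛ → ℝ) (hℓΦ : Measurable ℓΦ)
    (hcond : (fun p : 𝒳 × 𝒴 => ℓΦ (Φ p.1)) =ᵐ[Q ⊗ₘ κ]
      (Q ⊗ₘ κ)[(fun p : 𝒳 × 𝒴 => ℓ (p.2, h (Φ p.1))) |
        MeasurableSpace.comap (fun p : 𝒳 × 𝒴 => Φ p.1) inferInstance]) :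
    ∫ x, (∫ y, ℓ (y, h (Φ x)) ∂(κ x)) ∂Q = ∫ φ, ℓΦ φ ∂(Measure.map Φ Q) :=
  expected_loss_covariate_eq_representation_general κ Φ hΦ h ℓ Q hint ℓΦ hℓΦ hcond
end

section
/- In the setting of Proposition 1 (measurable spaces 𝒳, ℛ, 𝒴; shared label kernel κ : 𝒳 → 𝒴; measurable Φ : 𝒳 → ℛ, h : ℛ → ℝ, loss ℓ; probability measures μ₀ and ν on 𝒳; weight w with ∫ w dν = 1 and ν_w = ν.withDensity w; pointwise loss ℓ_h(x) = ∫ ℓ(y, h(Φ x)) dκ(x)(y); representation-space pointwise losses ℓ_{h,μ₀^Φ} and ℓ_{h,ν_w^Φ}; all relevant functions integrable), define η = ∫ (ξ₀(x) − ξ_w(x)) dμ₀(x), where ξ₀(x) = ℓ_{h,μ₀^Φ}(Φ x) − ℓ_h(x) and ξ_w(x) = ℓ_{h,ν_w^Φ}(Φ x) − ℓ_h(x). Then ∫ ℓ_h dμ₀ = ∫_ℛ ℓ_{h,ν_w^Φ}(φ) d(Φ_*μ₀)(φ) + η. -/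
/-!
The conditional expectation of the loss given the representation has the same mean as the loss
itself, so `∫ ℓΦ0 ∘ Φ dμ₀` is the target risk. Once the integrand of `η` is simplified to
`ℓΦ0 ∘ Φ - ℓΦw ∘ Φ`, the decomposition is this identity rearranged, the `ℓΦw` terms cancelling
after the pushforward integral is pulled back along `Φ`.
-/

open MeasureTheory ProbabilityTheory

namespace MeasureTheory.Measure

variable {α β E : Type*} [MeasurableSpace α] [MeasurableSpace β]
  [NormedAddCommGroup E] [NormedSpace ℝ E] [CompleteSpace E]
  {μ : Measure α} {κ : Kernel α β} [IsMarkovKernel κ]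

lemma integrable_of_integrable_comp_fst_compProd [SFinite μ] {g : α → E}
    (hg : Integrable (fun p => g p.1) (μ ⊗ₘ κ)) : Integrable g μ := by
  simpa using hg.integral_compProd

lemma integral_comp_fst_compProd_s2 [SFinite μ] {g : α → E}
    (hg : Integrable (fun p => g p.1) (μ ⊗ₘ κ)) :
    ∫ p, g p.1 ∂(μ ⊗ₘ κ) = ∫ x, g x ∂μ := by
  simp [integral_compProd hg]

lemma integral_eq_integral_integral_of_ae_eq_condExp [IsFiniteMeasure μ]
    {m : MeasurableSpace (α × β)} (hm : m ≤ Prod.instMeasurableSpace) {f : α × β → E}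
    (hf : Integrable f (μ ⊗ₘ κ)) {g : α → E}
    (hg : (fun p => g p.1) =ᵐ[μ ⊗ₘ κ] (μ ⊗ₘ κ)[f | m]) :
    ∫ x, g x ∂μ = ∫ x, ∫ y, f (x, y) ∂κ x ∂μ := by
  have hg_int : Integrable (fun p => g p.1) (μ ⊗ₘ κ) := integrable_condExp.congr hg.symm
  rw [← integral_comp_fst_compProd_s2 hg_int, integral_congr_ae hg, integral_condExp hm,
    integral_compProd hf]

end MeasureTheory.Measure

theorem target_risk_decomposition_general
    {𝒳 ℛ 𝒴 : Type*} [MeasurableSpace 𝒳] [MeasurableSpace ℛ] [MeasurableSpace 𝒴]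
    (κ : Kernel 𝒳 𝒴) [IsMarkovKernel κ]
    (Φ : 𝒳 → ℛ) (hΦ : Measurable Φ)
    (h : ℛ → ℝ)
    (ℓ : 𝒴 × ℝ → ℝ)
    (μ₀ : Measure 𝒳) [IsProbabilityMeasure μ₀]
    -- joint integrability of the loss under the joint measures
    (hint0 : Integrable (fun p : 𝒳 × 𝒴 => ℓ (p.2, h (Φ p.1))) (μ₀ ⊗ₘ κ))
    -- representation-space pointwise losses: versions of the conditional expectation of the
    -- loss given the representation, under `μ₀ ⊗ κ` and `ν_w ⊗ κ` respectively
    (ℓΦ0 ℓΦw : ℛ → ℝ)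
    (hcond0 : (fun p : 𝒳 × 𝒴 => ℓΦ0 (Φ p.1)) =ᵐ[μ₀ ⊗ₘ κ]
      (μ₀ ⊗ₘ κ)[(fun p : 𝒳 × 𝒴 => ℓ (p.2, h (Φ p.1))) |
        MeasurableSpace.comap (fun p : 𝒳 × 𝒴 => Φ p.1) inferInstance])
    -- integrability of all relevant functions
    (hint5 : Integrable ℓΦw (Measure.map Φ μ₀)) :
    ∫ x, (∫ y, ℓ (y, h (Φ x)) ∂(κ x)) ∂μ₀
      = (∫ φ, ℓΦw φ ∂(Measure.map Φ μ₀))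
        + ∫ x, ((ℓΦ0 (Φ x) - ∫ y, ℓ (y, h (Φ x)) ∂(κ x))
            - (ℓΦw (Φ x) - ∫ y, ℓ (y, h (Φ x)) ∂(κ x))) ∂μ₀ := by
  have hm : MeasurableSpace.comap (fun p : 𝒳 × 𝒴 => Φ p.1) inferInstance
      ≤ Prod.instMeasurableSpace := (hΦ.comp measurable_fst).comap_le
  have hrisk : ∫ x, ℓΦ0 (Φ x) ∂μ₀ = ∫ x, ∫ y, ℓ (y, h (Φ x)) ∂κ x ∂μ₀ :=
    Measure.integral_eq_integral_integral_of_ae_eq_condExp hm hint0 hcond0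
  have hℓΦ0_int : Integrable (fun x => ℓΦ0 (Φ x)) μ₀ :=
    Measure.integrable_of_integrable_comp_fst_compProd (integrable_condExp.congr hcond0.symm)
  have hℓΦw_int : Integrable (fun x => ℓΦw (Φ x)) μ₀ := hint5.comp_measurable hΦ
  simp_rw [sub_sub_sub_cancel_right]
  rw [integral_map hΦ.aemeasurable hint5.aestronglyMeasurable,
    integral_sub hℓΦ0_int hℓΦw_int, hrisk, add_sub_cancel]

/-- Lemma C.2: the target risk decomposes as the target-pushforward integral of
the weighted-observational representation-space loss plus the excess target information loss
`η = ∫ (ξ₀(x) − ξ_w(x)) dμ₀(x)`, with `ξ₀(x) = ℓΦ0(Φ x) − ℓ_h(x)`,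
`ξ_w(x) = ℓΦw(Φ x) − ℓ_h(x)`, `ℓ_h(x) = ∫ ℓ(y, h(Φ x)) dκ(x)(y)` and
`ν_w = ν.withDensity w` the weighted observational measure. -/
theorem target_risk_decomposition
    {𝒳 ℛ 𝒴 : Type*} [MeasurableSpace 𝒳] [MeasurableSpace ℛ] [MeasurableSpace 𝒴]
    (κ : Kernel 𝒳 𝒴) [IsMarkovKernel κ]
    (Φ : 𝒳 → ℛ) (hΦ : Measurable Φ)
    (h : ℛ → ℝ) (hh : Measurable h)
    (ℓ : 𝒴 × ℝ → ℝ) (hℓ : Measurable ℓ)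
    (μ₀ ν : Measure 𝒳) [IsProbabilityMeasure μ₀] [IsProbabilityMeasure ν]
    (w : 𝒳 → ℝ) (hw : Measurable w) (hw0 : ∀ x, 0 ≤ w x) (hw1 : ∫ x, w x ∂ν = 1)
    -- joint integrability of the loss under the joint measures
    (hint0 : Integrable (fun p : 𝒳 × 𝒴 => ℓ (p.2, h (Φ p.1))) (μ₀ ⊗ₘ κ))
    (hintw : Integrable (fun p : 𝒳 × 𝒴 => ℓ (p.2, h (Φ p.1)))
      ((ν.withDensity fun x => ENNReal.ofReal (w x)) ⊗ₘ κ))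
    -- representation-space pointwise losses: versions of the conditional expectation of the
    -- loss given the representation, under `μ₀ ⊗ κ` and `ν_w ⊗ κ` respectively
    (ℓΦ0 ℓΦw : ℛ → ℝ) (hℓΦ0 : Measurable ℓΦ0) (hℓΦw : Measurable ℓΦw)
    (hcond0 : (fun p : 𝒳 × 𝒴 => ℓΦ0 (Φ p.1)) =ᵐ[μ₀ ⊗ₘ κ]
      (μ₀ ⊗ₘ κ)[(fun p : 𝒳 × 𝒴 => ℓ (p.2, h (Φ p.1))) |
        MeasurableSpace.comap (fun p : 𝒳 × 𝒴 => Φ p.1) inferInstance])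
    (hcondw : (fun p : 𝒳 × 𝒴 => ℓΦw (Φ p.1))
        =ᵐ[(ν.withDensity fun x => ENNReal.ofReal (w x)) ⊗ₘ κ]
      ((ν.withDensity fun x => ENNReal.ofReal (w x)) ⊗ₘ κ)[
        (fun p : 𝒳 × 𝒴 => ℓ (p.2, h (Φ p.1))) |
        MeasurableSpace.comap (fun p : 𝒳 × 𝒴 => Φ p.1) inferInstance])
    -- integrability of all relevant functions
    (hint1 : Integrable (fun x => ∫ y, ℓ (y, h (Φ x)) ∂(κ x)) μ₀)
    (hint3 : Integrable (fun x => ℓΦ0 (Φ x)) μ₀)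
    (hint4 : Integrable (fun x => ℓΦw (Φ x)) μ₀)
    (hint5 : Integrable ℓΦw (Measure.map Φ μ₀)) :
    ∫ x, (∫ y, ℓ (y, h (Φ x)) ∂(κ x)) ∂μ₀
      = (∫ φ, ℓΦw φ ∂(Measure.map Φ μ₀))
        + ∫ x, ((ℓΦ0 (Φ x) - ∫ y, ℓ (y, h (Φ x)) ∂(κ x))
            - (ℓΦw (Φ x) - ∫ y, ℓ (y, h (Φ x)) ∂(κ x))) ∂μ₀ :=
  target_risk_decomposition_general κ Φ hΦ h ℓ μ₀ hint0 ℓΦ0 ℓΦw hcond0 hint5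
end

section
/- Let (Ω, 𝓕, μ) be a probability space, 𝒳, ℛ, 𝒴 measurable spaces, X : Ω → 𝒳 and Y : Ω → 𝒴 measurable random variables, and Φ : 𝒳 → ℛ measurable. Suppose Y and X are conditionally independent given the σ-algebra σ(Φ ∘ X) generated by Φ ∘ X. Then for every measurable f : 𝒴 × ℛ → ℝ such that ω ↦ f(Y ω, Φ (X ω)) is integrable, the conditional expectation μ[f(Y, Φ(X)) | σ(X)] equals μ[f(Y, Φ(X)) | σ(Φ ∘ X)] μ-almost everywhere. -/
/-!
With `m' = σ(Φ ∘ X) ≤ σ(X)`, conditional independence `σ(Y) ⫫ σ(X) | m'` means that for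
`A ∈ σ(X)` the conditional probability `μ⟦A | m'⟧` does not change when `σ(Y)` is added to the
conditioning: both candidates have the same integral over every `C ∩ D` with `C ∈ σ(Y)`,
`D ∈ m'`, and these sets form a π-system generating `σ(Y) ⊔ m'`. Since `Z = f(Y, Φ(X))` is
`σ(Y) ⊔ m'`-measurable, moving conditional expectations across products gives, for `A ∈ σ(X)`,
`∫_A μ[Z | m'] = ∫ μ[Z | m'] μ⟦A | m'⟧ = ∫ Z μ⟦A | m'⟧ = ∫ Z μ⟦A | σ(Y) ⊔ m'⟧ = ∫_A Z`,
which characterises `μ[Z | σ(X)]`.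
-/

open MeasureTheory ProbabilityTheory

lemma Set.indicator_eq_mul_indicator_one {ι M₀ : Type*} [MulZeroOneClass M₀] (s : Set ι)
    (f : ι → M₀) : s.indicator f = f * s.indicator fun _ ↦ 1 := by
  ext i
  by_cases hi : i ∈ s <;> simp [hi]

lemma IsPiSystem.image2_inter {Ω : Type*} {C D : Set (Set Ω)} (hC : IsPiSystem C)
    (hD : IsPiSystem D) : IsPiSystem (Set.image2 (· ∩ ·) C D) := by
  rintro _ ⟨s₁, hs₁, t₁, ht₁, rfl⟩ _ ⟨s₂, hs₂, t₂, ht₂, rfl⟩ hne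
  rw [Set.inter_inter_inter_comm] at hne ⊢
  exact Set.mem_image2_of_mem (hC _ hs₁ _ hs₂ hne.left) (hD _ ht₁ _ ht₂ hne.right)

lemma MeasurableSpace.sup_eq_generateFrom_image2_inter {Ω : Type*}
    (m₁ m₂ : MeasurableSpace Ω) :
    m₁ ⊔ m₂ = MeasurableSpace.generateFrom
      (Set.image2 (· ∩ ·) {s | MeasurableSet[m₁] s} {s | MeasurableSet[m₂] s}) := by
  refine le_antisymm (sup_le (fun s hs ↦ ?_) (fun s hs ↦ ?_))
    (MeasurableSpace.generateFrom_le ?_)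
  · exact MeasurableSpace.measurableSet_generateFrom ⟨s, hs, Set.univ, .univ, Set.inter_univ s⟩
  · exact MeasurableSpace.measurableSet_generateFrom ⟨Set.univ, .univ, s, hs, Set.univ_inter s⟩
  · rintro _ ⟨s, hs, t, ht, rfl⟩
    exact (le_sup_left (b := m₂) s hs).inter (le_sup_right (a := m₁) t ht)

namespace MeasureTheory

variable {Ω : Type*} {m mΩ : MeasurableSpace Ω} {μ : Measure Ω}

lemma setIntegral_eq_of_isPiSystem {p : Set (Set Ω)} {f g : Ω → ℝ} (hm : m ≤ mΩ)
    (h_eq : m = MeasurableSpace.generateFrom p) (h_pi : IsPiSystem p)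
    (hf : Integrable f μ) (hg : Integrable g μ)
    (basic : ∀ s ∈ p, ∫ x in s, f x ∂μ = ∫ x in s, g x ∂μ)
    (h_univ : ∫ x, f x ∂μ = ∫ x, g x ∂μ) {s : Set Ω} (hs : MeasurableSet[m] s) :
    ∫ x in s, f x ∂μ = ∫ x in s, g x ∂μ := by
  induction s, hs using MeasurableSpace.induction_on_inter h_eq h_pi with
  | empty => simp
  | basic s hs => exact basic s hs
  | compl s hs ih =>
    rw [setIntegral_compl (hm s hs) hf, setIntegral_compl (hm s hs) hg, ih, h_univ]
  | iUnion s hdisj hs ih =>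
    rw [integral_iUnion (fun i ↦ hm _ (hs i)) hdisj hf.integrableOn,
      integral_iUnion (fun i ↦ hm _ (hs i)) hdisj hg.integrableOn]
    exact tsum_congr ih

lemma Integrable.mul_indicator_one {f : Ω → ℝ} {A : Set Ω} (hf : Integrable f μ)
    (hA : MeasurableSet A) : Integrable (f * A.indicator fun _ ↦ 1) μ := by
  rw [← Set.indicator_eq_mul_indicator_one]
  exact hf.indicator hA

lemma integral_mul_condExp {f g : Ω → ℝ} (hm : m ≤ mΩ) [SigmaFinite (μ.trim hm)]
    (hf : StronglyMeasurable[m] f) (hfg : Integrable (f * g) μ) (hg : Integrable g μ) :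
    ∫ x, (f * μ[g | m]) x ∂μ = ∫ x, (f * g) x ∂μ := by
  rw [← integral_condExp hm (f := f * g)]
  exact integral_congr_ae (condExp_mul_of_stronglyMeasurable_left hf hfg hg).symm

lemma integrable_condExp_indicator_mul {A : Set Ω} {f : Ω → ℝ} (hf : Integrable f μ) :
    Integrable (μ⟦A | m⟧ * f) μ := by
  refine hf.bdd_mul (c := 1) integrable_condExp.aestronglyMeasurable
    (ae_bdd_norm_condExp_of_ae_bdd_norm (ae_of_all _ fun ω ↦ ?_))
  by_cases hω : ω ∈ A <;> simp [hω]

lemma condExp_indicator_ae_eq_mul [IsFiniteMeasure μ] {g : Ω → ℝ} {C : Set Ω}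
    (hg : StronglyMeasurable[m] g) (hg_int : Integrable g μ) (hC : MeasurableSet C) :
    μ[C.indicator g | m] =ᵐ[μ] g * μ⟦C | m⟧ := by
  rw [Set.indicator_eq_mul_indicator_one C g]
  exact condExp_mul_of_stronglyMeasurable_left hg (hg_int.mul_indicator_one hC)
    ((integrable_const 1).indicator hC)

end MeasureTheory

namespace ProbabilityTheory

variable {Ω : Type*} {m' m₁ m₂ mΩ : MeasurableSpace Ω} [StandardBorelSpace Ω]
  {hm' : m' ≤ mΩ} {μ : Measure Ω} [IsFiniteMeasure μ]

lemma CondIndep.condExp_indicator_sup_ae_eq (h : CondIndep m' m₁ m₂ hm' μ) (hm₁ : m₁ ≤ mΩ)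
    (hm₂ : m₂ ≤ mΩ) {A : Set Ω} (hA : MeasurableSet[m₂] A) :
    μ⟦A | m₁ ⊔ m'⟧ =ᵐ[μ] μ⟦A | m'⟧ := by
  have hA_int : Integrable (A.indicator fun _ ↦ (1 : ℝ)) μ :=
    (integrable_const 1).indicator (hm₂ A hA)
  refine (ae_eq_condExp_of_forall_setIntegral_eq (sup_le hm₁ hm') hA_int
    (fun _ _ _ ↦ integrable_condExp.integrableOn) (fun s hs _ ↦ ?_)
    (stronglyMeasurable_condExp.mono (le_sup_right : m' ≤ m₁ ⊔ m')).aestronglyMeasurable).symm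
  refine setIntegral_eq_of_isPiSystem (sup_le hm₁ hm')
    (MeasurableSpace.sup_eq_generateFrom_image2_inter m₁ m')
    ((@MeasurableSpace.isPiSystem_measurableSet Ω m₁).image2_inter
      (@MeasurableSpace.isPiSystem_measurableSet Ω m'))
    integrable_condExp hA_int ?_ (integral_condExp hm') hs
  rintro _ ⟨C, hC, D, hD, rfl⟩
  have hCA := (condIndep_iff m' m₁ m₂ hm' hm₁ hm₂ μ).mp h C A hC hA
  have hCΩ : MeasurableSet C := hm₁ C hC
  calc ∫ x in C ∩ D, (μ⟦A | m'⟧) x ∂μ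
      = ∫ x in D, μ[C.indicator (μ⟦A | m'⟧) | m'] x ∂μ := by
        rw [setIntegral_condExp hm' (integrable_condExp.indicator hCΩ) hD,
          setIntegral_indicator hCΩ, Set.inter_comm]
    _ = ∫ x in D, (μ⟦C ∩ A | m'⟧) x ∂μ := by
        refine setIntegral_congr_ae (hm' D hD) ?_
        filter_upwards [condExp_indicator_ae_eq_mul stronglyMeasurable_condExp integrable_condExp
          hCΩ, hCA] with ω hω hω' _
        rw [hω, hω', Pi.mul_apply, Pi.mul_apply, mul_comm]
    _ = ∫ x in C ∩ D, A.indicator (fun _ ↦ (1 : ℝ)) x ∂μ := by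
        rw [setIntegral_condExp hm' ((integrable_const 1).indicator (hCΩ.inter (hm₂ A hA))) hD,
          ← Set.indicator_indicator, setIntegral_indicator hCΩ, Set.inter_comm]

theorem CondIndep.condExp_ae_eq_of_stronglyMeasurable_sup (h : CondIndep m' m₁ m₂ hm' μ)
    (hm₁ : m₁ ≤ mΩ) (hm₂ : m₂ ≤ mΩ) (hm'₂ : m' ≤ m₂) {f : Ω → ℝ}
    (hf : StronglyMeasurable[m₁ ⊔ m'] f) (hf_int : Integrable f μ) :
    μ[f | m₂] =ᵐ[μ] μ[f | m'] := by
  refine (ae_eq_condExp_of_forall_setIntegral_eq hm₂ hf_int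
    (fun _ _ _ ↦ integrable_condExp.integrableOn) (fun A hA _ ↦ ?_)
    (stronglyMeasurable_condExp.mono hm'₂).aestronglyMeasurable).symm
  have hAΩ : MeasurableSet A := hm₂ A hA
  have h1A : Integrable (A.indicator fun _ ↦ (1 : ℝ)) μ := (integrable_const 1).indicator hAΩ
  calc ∫ x in A, (μ[f | m']) x ∂μ
      = ∫ x, (μ[f | m'] * A.indicator fun _ ↦ (1 : ℝ)) x ∂μ := by
        rw [← Set.indicator_eq_mul_indicator_one, integral_indicator hAΩ]
    _ = ∫ x, (μ⟦A | m'⟧ * f) x ∂μ := by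
        rw [← integral_mul_condExp hm' stronglyMeasurable_condExp
            (integrable_condExp.mul_indicator_one hAΩ) h1A,
          mul_comm, integral_mul_condExp hm' stronglyMeasurable_condExp
            (integrable_condExp_indicator_mul hf_int) hf_int]
    _ = ∫ x, (μ⟦A | m₁ ⊔ m'⟧ * f) x ∂μ := by
        refine integral_congr_ae ?_
        filter_upwards [h.condExp_indicator_sup_ae_eq hm₁ hm₂ hA] with ω hω
        rw [Pi.mul_apply, Pi.mul_apply, hω]
    _ = ∫ x in A, f x ∂μ := by
        rw [mul_comm,
          integral_mul_condExp (sup_le hm₁ hm') hf (hf_int.mul_indicator_one hAΩ) h1A,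
          ← Set.indicator_eq_mul_indicator_one, integral_indicator hAΩ]

end ProbabilityTheory

/-- if `Y` and `X` are conditionally independent given the σ-algebra generated
by `Φ ∘ X` (the sufficiency condition `Y ⫫ X | Φ(X)`), then for any integrable loss of the
form `f(Y, Φ(X))`, the conditional expectation given `σ(X)` coincides a.e. with the
conditional expectation given `σ(Φ ∘ X)`. -/
theorem condexp_given_covariates_eq_given_representation
    {Ω 𝒳 ℛ 𝒴 : Type*} [mΩ : MeasurableSpace Ω] [StandardBorelSpace Ω]
    [MeasurableSpace 𝒳] [MeasurableSpace ℛ] [MeasurableSpace 𝒴]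
    (μ : Measure Ω) [IsProbabilityMeasure μ]
    (X : Ω → 𝒳) (hX : Measurable X)
    (Y : Ω → 𝒴) (hY : Measurable Y)
    (Φ : 𝒳 → ℛ) (hΦ : Measurable Φ)
    (hm : MeasurableSpace.comap (fun ω => Φ (X ω)) inferInstance ≤ mΩ)
    (hCI : CondIndepFun (MeasurableSpace.comap (fun ω => Φ (X ω)) inferInstance) hm Y X μ)
    (f : 𝒴 × ℛ → ℝ) (hf : Measurable f)
    (hint : Integrable (fun ω => f (Y ω, Φ (X ω))) μ) :
    μ[(fun ω => f (Y ω, Φ (X ω))) | MeasurableSpace.comap X inferInstance]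
      =ᵐ[μ]
    μ[(fun ω => f (Y ω, Φ (X ω))) |
        MeasurableSpace.comap (fun ω => Φ (X ω)) inferInstance] := by
  have hΦX_le_X : MeasurableSpace.comap (fun ω => Φ (X ω)) inferInstance
      ≤ MeasurableSpace.comap X inferInstance :=
    fun _ ⟨t, ht, hs⟩ ↦ ⟨Φ ⁻¹' t, hΦ ht, hs⟩
  have hf_meas : StronglyMeasurable[MeasurableSpace.comap Y inferInstance ⊔
      MeasurableSpace.comap (fun ω => Φ (X ω)) inferInstance] fun ω => f (Y ω, Φ (X ω)) :=
    (hf.comp ((comap_measurable Y).mono le_sup_left le_rfl |>.prodMk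
      ((comap_measurable _).mono le_sup_right le_rfl))).stronglyMeasurable
  exact ((condIndepFun_iff_condIndep _ _ Y X μ).mp hCI).condExp_ae_eq_of_stronglyMeasurable_sup
    hY.comap_le hX.comap_le hΦX_le_X hf_meas hint
end

section
/- Let (Ω, 𝓕, μ) be a probability space. Let 𝒳 be a countable type, X : Ω → 𝒳, A : Ω → {0, 1}, C : Ω → ℕ, and for a fixed treatment value a ∈ {0,1} let T_a : Ω → ℕ be the potential event time, all measurable. Let T : Ω → ℕ be the observed event time and assume consistency: T(ω) = T_a(ω) for all ω with A(ω) = a. Fix τ ∈ ℕ and x ∈ 𝒳, and assume the positivity condition μ(T_a ≥ τ ∧ C ≥ τ ∧ A = a ∧ X = x) > 0 and μ(T_a ≥ τ ∧ X = x) > 0. Assume unconfoundedness in the form: for every s ∈ ℕ, μ(T_a = s | X = x) = μ(T_a = s | A = a ∧ X = x); and censoring at random in the form: for every s ∈ ℕ, μ(T_a = s | A = a ∧ X = x) = μ(T_a = s | C ≥ τ ∧ A = a ∧ X = x). Then the causal hazard equals the observational hazard: μ(T_a = τ | T_a ≥ τ ∧ X = x) = μ(T = τ ∧ C ≥ τ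 | T ≥ τ ∧ C ≥ τ ∧ A = a ∧ X = x). -/
/-!
Within any conditioning event `B`, the hazard of `T_a` at `τ` depends only on the conditional law
of `T_a` given `B`. Unconfoundedness and censoring at random say that this law is the same for
`B = {X = x}` and `B = {C ≥ τ, A = a, X = x}`, so the two hazards agree; by consistency, the second
one is the observational hazard, since `T = T_a` on `{A = a}`.
-/

open MeasureTheory ProbabilityTheory

namespace ProbabilityTheory

variable {Ω α : Type*} [MeasurableSpace Ω] [MeasurableSpace α] {Y : Ω → α}

lemma cond_map (ν : Measure Ω) (hY : Measurable Y) {S : Set α} (hS : MeasurableSet S) :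
    (ν.map Y)[|S] = (ν[|Y ⁻¹' S]).map Y := by
  rw [cond, cond, Measure.map_apply hY hS, Measure.restrict_map hY hS, Measure.map_smul]

lemma cond_preimage_inter_eq_cond_map (μ : Measure Ω) [IsFiniteMeasure μ] (hY : Measurable Y)
    {B : Set Ω} (hB : MeasurableSet B) {S E : Set α} (hS : MeasurableSet S)
    (hE : MeasurableSet E) :
    μ[Y ⁻¹' E | Y ⁻¹' S ∩ B] = ((μ[|B]).map Y)[E | S] := by
  rw [cond_map _ hY hS, Measure.map_apply hY hE, cond_cond_eq_cond_inter hB (hY hS),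
    Set.inter_comm]

lemma cond_congr_of_inter_eq {μ : Measure Ω} {s t t' : Set Ω} (hs : MeasurableSet s)
    (h : s ∩ t = s ∩ t') : μ[t | s] = μ[t' | s] := by
  rw [← cond_inter_self hs, h, cond_inter_self hs]

end ProbabilityTheory

theorem treatment_specific_hazard_identification_general
    {Ω 𝒳 : Type*} [MeasurableSpace Ω] [MeasurableSpace 𝒳]
    [MeasurableSingletonClass 𝒳]
    (μ : Measure Ω) [IsProbabilityMeasure μ]
    (X : Ω → 𝒳) (A : Ω → Bool) (C : Ω → ℕ) (Ta T : Ω → ℕ)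
    (hX : Measurable X) (hA : Measurable A) (hC : Measurable C)
    (hTa : Measurable Ta)
    (a : Bool)
    (hcons : ∀ ω, A ω = a → T ω = Ta ω)
    (τ : ℕ) (x : 𝒳)
    (hunconf : ∀ s : ℕ, μ[|{ω | X ω = x}] {ω | Ta ω = s}
        = μ[|{ω | A ω = a ∧ X ω = x}] {ω | Ta ω = s})
    (hcar : ∀ s : ℕ, μ[|{ω | A ω = a ∧ X ω = x}] {ω | Ta ω = s}
        = μ[|{ω | τ ≤ C ω ∧ A ω = a ∧ X ω = x}] {ω | Ta ω = s}) :
    μ[|{ω | τ ≤ Ta ω ∧ X ω = x}] {ω | Ta ω = τ}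
      = μ[|{ω | τ ≤ T ω ∧ τ ≤ C ω ∧ A ω = a ∧ X ω = x}] {ω | T ω = τ ∧ τ ≤ C ω} := by
  set B := {ω | X ω = x}
  set B' := {ω | τ ≤ C ω ∧ A ω = a ∧ X ω = x}
  have hB : MeasurableSet B := hX (measurableSet_singleton x)
  have hB' : MeasurableSet B' :=
    (hC measurableSet_Ici).inter ((hA (measurableSet_singleton a)).inter hB)
  have hlaw : (μ[|B]).map Ta = (μ[|B']).map Ta := Measure.ext_of_singleton fun s => by
    rw [Measure.map_apply hTa (measurableSet_singleton s),
      Measure.map_apply hTa (measurableSet_singleton s)]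
    exact (hunconf s).trans (hcar s)
  have hobs : {ω | τ ≤ T ω ∧ τ ≤ C ω ∧ A ω = a ∧ X ω = x} = Ta ⁻¹' Set.Ici τ ∩ B' := by
    ext ω
    simp +contextual [B', hcons]
  have hrisk : MeasurableSet (Ta ⁻¹' Set.Ici τ ∩ B') := (hTa measurableSet_Ici).inter hB'
  calc μ[Ta ⁻¹' {τ} | Ta ⁻¹' Set.Ici τ ∩ B]
      = ((μ[|B]).map Ta)[{τ} | Set.Ici τ] :=
        cond_preimage_inter_eq_cond_map μ hTa hB measurableSet_Ici (measurableSet_singleton τ)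
    _ = μ[Ta ⁻¹' {τ} | Ta ⁻¹' Set.Ici τ ∩ B'] := by
      rw [hlaw, cond_preimage_inter_eq_cond_map μ hTa hB' measurableSet_Ici
        (measurableSet_singleton τ)]
    _ = _ := by
      rw [hobs]
      refine cond_congr_of_inter_eq hrisk ?_
      ext ω
      simp +contextual [B', hcons]

/-- identification of the treatment-specific hazard.  Under consistency
(`T = T_a` whenever `A = a`), unconfoundedness (the conditional law of `T_a` given `X = x`
does not change upon further conditioning on `A = a`), censoring at random (it does not
change upon further conditioning on `C ≥ τ`), and positivity, the causal hazard
`μ(T_a = τ | T_a ≥ τ, X = x)` equals the observational hazard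
`μ(T = τ, C ≥ τ | T ≥ τ, C ≥ τ, A = a, X = x)`. -/
theorem treatment_specific_hazard_identification
    {Ω 𝒳 : Type*} [MeasurableSpace Ω] [MeasurableSpace 𝒳]
    [Countable 𝒳] [MeasurableSingletonClass 𝒳]
    (μ : Measure Ω) [IsProbabilityMeasure μ]
    (X : Ω → 𝒳) (A : Ω → Bool) (C : Ω → ℕ) (Ta T : Ω → ℕ)
    (hX : Measurable X) (hA : Measurable A) (hC : Measurable C)
    (hTa : Measurable Ta) (hT : Measurable T)
    (a : Bool)
    (hcons : ∀ ω, A ω = a → T ω = Ta ω)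
    (τ : ℕ) (x : 𝒳)
    (hpos1 : 0 < μ {ω | τ ≤ Ta ω ∧ τ ≤ C ω ∧ A ω = a ∧ X ω = x})
    (hpos2 : 0 < μ {ω | τ ≤ Ta ω ∧ X ω = x})
    (hunconf : ∀ s : ℕ, μ[|{ω | X ω = x}] {ω | Ta ω = s}
        = μ[|{ω | A ω = a ∧ X ω = x}] {ω | Ta ω = s})
    (hcar : ∀ s : ℕ, μ[|{ω | A ω = a ∧ X ω = x}] {ω | Ta ω = s}
        = μ[|{ω | τ ≤ C ω ∧ A ω = a ∧ X ω = x}] {ω | Ta ω = s}) :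
    μ[|{ω | τ ≤ Ta ω ∧ X ω = x}] {ω | Ta ω = τ}
      = μ[|{ω | τ ≤ T ω ∧ τ ≤ C ω ∧ A ω = a ∧ X ω = x}] {ω | T ω = τ ∧ τ ≤ C ω} :=
  treatment_specific_hazard_identification_general μ X A C Ta T hX hA hC hTa a hcons τ x hunconf
    hcar
end
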